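/- arXiv:1904.02694 — 3 statements merged into one kernel-verified Lean document; each statement's English description precedes it below -/
import Mathlib

section
/- Let p and p' be consecutive patterns of the same length, both non-overlapping and interchangeable. Then p and p' are super-strongly Wilf equivalent on inversion sequences: for all n and all T ⊆ {1,...,n}, the number of inversion sequences of length n whose set of occurrence positions of p equals T is the same as for p'. -/
def IsInvSeq {n : ℕ} (e : Fin n → Fin n) : Prop := ∀ i : Fin n, (e i : ℕ) ≤ (i : ℕ)

def extSeq {n : ℕ} (e : Fin n → Fin n) : ℕ → ℕ := fun i => if h : i < n then (e ⟨i, h⟩ : ℕ) else 0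

def IsPattern (r : ℕ) (p : ℕ → ℕ) : Prop := ∀ i < r, ∀ j < p i, ∃ k < r, p k = j

def OccPatAt (r : ℕ) (p : ℕ → ℕ) {n : ℕ} (e : Fin n → Fin n) (i : ℕ) : Prop :=
  i + r ≤ n ∧ ∀ a < r, ∀ b < r, (extSeq e (i + a) ≤ extSeq e (i + b) ↔ p a ≤ p b)

def OverlapAt (r : ℕ) (p q : ℕ → ℕ) (i : ℕ) : Prop :=
  ∀ a < i, ∀ b < i, (p a ≤ p b ↔ q (r - i + a) ≤ q (r - i + b))

def Overlaps (r : ℕ) (p q : ℕ → ℕ) : Prop := ∃ i, 1 < i ∧ i < r ∧ OverlapAt r q p i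

def SelfNonOverlapping (r : ℕ) (p : ℕ → ℕ) : Prop := ¬ Overlaps r p p

def ChangeableFor (r : ℕ) (p p' : ℕ → ℕ) : Prop :=
  ∀ i < r, ∃ j < r, (j ≤ i ∧ p' i ≤ p j) ∨ (i < j ∧ p' i + j ≤ p j + i)

def Interchangeable (r : ℕ) (p p' : ℕ → ℕ) : Prop :=
  p 0 = p' 0 ∧ p (r - 1) = p' (r - 1) ∧
  (Finset.range r).sup p = (Finset.range r).sup p' ∧
  ChangeableFor r p p' ∧ ChangeableFor r p' p

open scoped Classical

/-! ## Möbius inversion machinery -/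

lemma split_card {α : Type} [Fintype α] (F : α → Finset ℕ) (U : Finset ℕ)
    (hF : ∀ a, F a ⊆ U) (T : Finset ℕ) :
    (Finset.univ.filter fun a => T ⊆ F a).card
      = ∑ T' ∈ U.powerset.filter (fun T' => T ⊆ T'),
          (Finset.univ.filter fun a => F a = T').card := by
  rw [← Finset.card_biUnion]
  · congr 1
    ext a
    constructor
    · intro ha
      have h := (Finset.mem_filter.1 ha).2
      exact Finset.mem_biUnion.2 ⟨F a,
        Finset.mem_filter.2 ⟨Finset.mem_powerset.2 (hF a), h⟩,
        Finset.mem_filter.2 ⟨Finset.mem_univ a, rfl⟩⟩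
    · intro ha
      obtain ⟨T', hT', haT'⟩ := Finset.mem_biUnion.1 ha
      have h1 := (Finset.mem_filter.1 haT').2
      have h2 := (Finset.mem_filter.1 hT').2
      exact Finset.mem_filter.2 ⟨Finset.mem_univ a, h1 ▸ h2⟩
  · intro x _ y _ hxy
    apply Finset.disjoint_left.mpr
    intro a ha hb
    simp only [Finset.mem_filter] at ha hb
    exact hxy (ha.2.symm.trans hb.2)

lemma moebius {α β : Type} [Fintype α] [Fintype β] (F : α → Finset ℕ) (G : β → Finset ℕ)
    (U : Finset ℕ) (hF : ∀ a, F a ⊆ U) (hG : ∀ b, G b ⊆ U)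
    (h : ∀ S : Finset ℕ, (Finset.univ.filter fun a => S ⊆ F a).card
        = (Finset.univ.filter fun b => S ⊆ G b).card)
    (T : Finset ℕ) :
    (Finset.univ.filter fun a => F a = T).card
      = (Finset.univ.filter fun b => G b = T).card := by
  by_cases hTU : T ⊆ U
  · have key : ∀ k (T : Finset ℕ), T ⊆ U → (U \ T).card = k →
        (Finset.univ.filter fun a => F a = T).card
          = (Finset.univ.filter fun b => G b = T).card := by
      intro k
      induction k using Nat.strong_induction_on with
      | _ k ih =>
        intro T hTU hc
        have hsplitF := split_card F U hF T
        have hsplitG := split_card G U hG T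
        have hmem : T ∈ U.powerset.filter (fun T' => T ⊆ T') :=
          Finset.mem_filter.2 ⟨Finset.mem_powerset.2 hTU, Finset.Subset.refl T⟩
        rw [← Finset.add_sum_erase _ _ hmem] at hsplitF hsplitG
        have hsum : ∑ T' ∈ (U.powerset.filter fun T' => T ⊆ T').erase T,
              (Finset.univ.filter fun a => F a = T').card
            = ∑ T' ∈ (U.powerset.filter fun T' => T ⊆ T').erase T,
              (Finset.univ.filter fun b => G b = T').card := by
          apply Finset.sum_congr rfl
          intro T' hT'
          have h1 := Finset.mem_of_mem_erase hT'
          have hne : T' ≠ T := Finset.ne_of_mem_erase hT'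
          simp only [Finset.mem_filter, Finset.mem_powerset] at h1
          have hss : T ⊂ T' := lt_of_le_of_ne h1.2 (Ne.symm hne)
          have c1 := Finset.card_sdiff_of_subset h1.1
          have c2 := Finset.card_sdiff_of_subset hTU
          have c3 : T.card < T'.card := Finset.card_lt_card hss
          have c4 := Finset.card_le_card h1.1
          exact ih ((U \ T').card) (by omega) T' h1.1 rfl
        have hT := h T
        omega
    exact key ((U \ T).card) T hTU rfl
  · have h1 : (Finset.univ.filter fun a => F a = T) = ∅ :=
      Finset.filter_false_of_mem (fun a _ ha => hTU (ha ▸ hF a))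
    have h2 : (Finset.univ.filter fun b => G b = T) = ∅ :=
      Finset.filter_false_of_mem (fun b _ hb => hTU (hb ▸ hG b))
    rw [h1, h2]
    rfl

/-! ## The pattern-replacement bijection -/

noncomputable def pk (r : ℕ) (p : ℕ → ℕ) (m : ℕ) : ℕ :=
  if h : ∃ a, a < r ∧ p a = m then h.choose else 0

lemma pk_spec {r : ℕ} {p : ℕ → ℕ} {m : ℕ} (h : ∃ a, a < r ∧ p a = m) :
    pk r p m < r ∧ p (pk r p m) = m := by
  rw [pk, dif_pos h]; exact h.choose_spec

lemma pat_surj {r : ℕ} {p : ℕ → ℕ} (hp : IsPattern r p) (hr : 0 < r) {m : ℕ}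
    (hm : m ≤ (Finset.range r).sup p) : ∃ a, a < r ∧ p a = m := by
  obtain ⟨a, ha, hpa⟩ := Finset.exists_mem_eq_sup (Finset.range r)
    (Finset.nonempty_range_iff.2 hr.ne') p
  rw [Finset.mem_range] at ha
  rcases eq_or_lt_of_le hm with h | h
  · exact ⟨a, ha, by omega⟩
  · obtain ⟨k, hk, hpk⟩ := hp a ha m (by omega)
    exact ⟨k, hk, hpk⟩

structure Ctx (r : ℕ) (p p' : ℕ → ℕ) (K : ℕ) : Prop where
  hr : 0 < r
  hK : ∀ a < r, p a ≤ K
  hK' : ∀ a < r, p' a ≤ K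
  hs : ∀ m ≤ K, ∃ a, a < r ∧ p a = m
  h0 : p 0 = p' 0
  hl : p (r - 1) = p' (r - 1)
  hchg : ChangeableFor r p p'
  hno : SelfNonOverlapping r p

noncomputable def transf (r : ℕ) (p p' : ℕ → ℕ) (S : Finset ℕ) {n : ℕ}
    (e : Fin n → Fin n) : ℕ → ℕ :=
  fun x => if h : ∃ s, s ∈ S ∧ s ≤ x ∧ x < s + r then
      extSeq e (h.choose + pk r p (p' (x - h.choose)))
    else extSeq e x

noncomputable def transFin (r : ℕ) (p p' : ℕ → ℕ) (S : Finset ℕ) {n : ℕ}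
    (e : Fin n → Fin n) : Fin n → Fin n :=
  fun i => ⟨min (transf r p p' S e i.1) i.1, lt_of_le_of_lt (min_le_right _ _) i.isLt⟩

section Lemmas

variable {r K n : ℕ} {p p' : ℕ → ℕ} {S : Finset ℕ} {e : Fin n → Fin n}

lemma extSeq_le (he : IsInvSeq e) (x : ℕ) : extSeq e x ≤ x := by
  unfold extSeq; split
  · exact he _
  · exact Nat.zero_le x

lemma L_mono (C : Ctx r p p' K) {s : ℕ} (hocc : OccPatAt r p e s) {m m' : ℕ}
    (hm : m ≤ K) (hm' : m' ≤ K) :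
    extSeq e (s + pk r p m) ≤ extSeq e (s + pk r p m') ↔ m ≤ m' := by
  obtain ⟨h1, h2⟩ := pk_spec (C.hs m hm)
  obtain ⟨h1', h2'⟩ := pk_spec (C.hs m' hm')
  rw [hocc.2 _ h1 _ h1', h2, h2']

lemma L_eval (C : Ctx r p p' K) {s a : ℕ} (hocc : OccPatAt r p e s) (ha : a < r) :
    extSeq e (s + pk r p (p a)) = extSeq e (s + a) := by
  obtain ⟨h1, h2⟩ := pk_spec (C.hs (p a) (C.hK a ha))
  apply le_antisymm
  · exact (hocc.2 _ h1 _ ha).2 (le_of_eq h2)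
  · exact (hocc.2 _ ha _ h1).2 (le_of_eq h2.symm)

lemma L_add (C : Ctx r p p' K) {s : ℕ} (hocc : OccPatAt r p e s) {m t : ℕ}
    (h : m + t ≤ K) :
    extSeq e (s + pk r p m) + t ≤ extSeq e (s + pk r p (m + t)) := by
  induction t with
  | zero => simp
  | succ t ih =>
    have h1 := ih (by omega)
    have h2 : extSeq e (s + pk r p (m + t)) < extSeq e (s + pk r p (m + t + 1)) := by
      by_contra hc
      push_neg at hc
      have := (L_mono C hocc (show m + t + 1 ≤ K by omega) (show m + t ≤ K by omega)).1 hc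
      omega
    have : m + (t + 1) = m + t + 1 := by omega
    rw [this]
    omega

lemma L_sep (C : Ctx r p p' K) (hocc : ∀ s ∈ S, OccPatAt r p e s) {s t : ℕ}
    (hsS : s ∈ S) (htS : t ∈ S) (hst : s < t) : s + r ≤ t + 1 := by
  by_contra hc
  push_neg at hc
  apply C.hno
  refine ⟨s + r - t, by omega, by omega, ?_⟩
  intro a ha b hb
  have I1 := (hocc t htS).2 a (by omega) b (by omega)
  have I2 := (hocc s hsS).2 (t - s + a) (by omega) (t - s + b) (by omega)
  rw [show s + (t - s + a) = t + a by omega, show s + (t - s + b) = t + b by omega] at I2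
  rw [show r - (s + r - t) + a = t - s + a by omega,
    show r - (s + r - t) + b = t - s + b by omega]
  exact I1.symm.trans I2

lemma L_agree (C : Ctx r p p' K) (hocc : ∀ s ∈ S, OccPatAt r p e s) {s t x : ℕ}
    (hsS : s ∈ S) (htS : t ∈ S) (hs1 : s ≤ x) (hs2 : x < s + r)
    (ht1 : t ≤ x) (ht2 : x < t + r) (hst : s < t) :
    extSeq e (t + pk r p (p' (x - t))) = extSeq e (s + pk r p (p' (x - s))) := by
  have hsep := L_sep C hocc hsS htS hst
  have hxt : x = t := by omega
  have hxs : x - s = r - 1 := by omega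
  rw [show x - t = 0 by omega, hxs, ← C.h0, ← C.hl,
    L_eval C (hocc t htS) C.hr, L_eval C (hocc s hsS) (by omega : r - 1 < r)]
  congr 1
  omega

lemma L_consistent (C : Ctx r p p' K) (hocc : ∀ s ∈ S, OccPatAt r p e s) {s x : ℕ}
    (hsS : s ∈ S) (hx1 : s ≤ x) (hx2 : x < s + r) :
    transf r p p' S e x = extSeq e (s + pk r p (p' (x - s))) := by
  have hex : ∃ s, s ∈ S ∧ s ≤ x ∧ x < s + r := ⟨s, hsS, hx1, hx2⟩
  rw [transf, dif_pos hex]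
  obtain ⟨htS, ht1, ht2⟩ := hex.choose_spec
  rcases lt_trichotomy hex.choose s with h | h | h
  · exact (L_agree C hocc hex.choose_spec.1 hsS ht1 ht2 hx1 hx2 h).symm
  · rw [h]
  · exact L_agree C hocc hsS htS hx1 hx2 ht1 ht2 h

lemma L_bound (C : Ctx r p p' K) (he : IsInvSeq e) (hocc : ∀ s ∈ S, OccPatAt r p e s)
    (x : ℕ) : transf r p p' S e x ≤ x := by
  by_cases hex : ∃ s, s ∈ S ∧ s ≤ x ∧ x < s + r
  · obtain ⟨s, hsS, hx1, hx2⟩ := hex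
    rw [L_consistent C hocc hsS hx1 hx2]
    have ha : x - s < r := by omega
    obtain ⟨j, hjr, hcase⟩ := C.hchg (x - s) ha
    have hKa : p' (x - s) ≤ K := C.hK' _ ha
    rcases hcase with ⟨hja, hle⟩ | ⟨haj, hle⟩
    · have h1 := (L_mono C (hocc s hsS) hKa (C.hK j hjr)).2 hle
      rw [L_eval C (hocc s hsS) hjr] at h1
      have h2 := extSeq_le he (s + j)
      omega
    · have hK2 : p' (x - s) + (j - (x - s)) ≤ K := by have := C.hK j hjr; omega
      have h1 := L_add C (hocc s hsS) (m := p' (x - s)) (t := j - (x - s)) hK2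
      have h2 := (L_mono C (hocc s hsS) hK2 (C.hK j hjr)).2 (by omega)
      rw [L_eval C (hocc s hsS) hjr] at h2
      have h3 := extSeq_le he (s + j)
      omega
  · rw [transf, dif_neg hex]
    exact extSeq_le he x

lemma L_ext (C : Ctx r p p' K) (he : IsInvSeq e) (hocc : ∀ s ∈ S, OccPatAt r p e s)
    (x : ℕ) : extSeq (transFin r p p' S e) x = transf r p p' S e x := by
  by_cases hx : x < n
  · show (if h : x < n then ((transFin r p p' S e) ⟨x, h⟩ : ℕ) else 0) = _
    rw [dif_pos hx]
    exact min_eq_left (L_bound C he hocc x)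
  · show (if h : x < n then ((transFin r p p' S e) ⟨x, h⟩ : ℕ) else 0) = _
    rw [dif_neg hx]
    have hex : ¬ ∃ s, s ∈ S ∧ s ≤ x ∧ x < s + r := by
      rintro ⟨s, hsS, _, h2⟩
      exact hx (lt_of_lt_of_le h2 (hocc s hsS).1)
    rw [transf, dif_neg hex]
    unfold extSeq
    rw [dif_neg hx]

lemma L_isInv : IsInvSeq (transFin r p p' S e) := fun i => min_le_right _ _

lemma L_occ' (C : Ctx r p p' K) (he : IsInvSeq e) (hocc : ∀ s ∈ S, OccPatAt r p e s)
    {s : ℕ} (hsS : s ∈ S) : OccPatAt r p' (transFin r p p' S e) s := by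
  refine ⟨(hocc s hsS).1, ?_⟩
  intro a ha b hb
  rw [L_ext C he hocc, L_ext C he hocc,
    L_consistent C hocc hsS (by omega) (by omega : s + a < s + r),
    L_consistent C hocc hsS (by omega) (by omega : s + b < s + r)]
  rw [show s + a - s = a by omega, show s + b - s = b by omega]
  exact L_mono C (hocc s hsS) (C.hK' a ha) (C.hK' b hb)

lemma L_levels (C : Ctx r p p' K) (C' : Ctx r p' p K) (he : IsInvSeq e)
    (hocc : ∀ s ∈ S, OccPatAt r p e s) {s m : ℕ} (hsS : s ∈ S) (hm : m ≤ K) :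
    extSeq (transFin r p p' S e) (s + pk r p' m) = extSeq e (s + pk r p m) := by
  obtain ⟨h1, h2⟩ := pk_spec (C'.hs m hm)
  rw [L_ext C he hocc,
    L_consistent C hocc hsS (by omega) (by omega : s + pk r p' m < s + r),
    show s + pk r p' m - s = pk r p' m by omega, h2]

lemma L_comp (C : Ctx r p p' K) (C' : Ctx r p' p K) (he : IsInvSeq e)
    (hocc : ∀ s ∈ S, OccPatAt r p e s) :
    transFin r p' p S (transFin r p p' S e) = e := by
  have hocc' : ∀ s ∈ S, OccPatAt r p' (transFin r p p' S e) s :=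
    fun s hs => L_occ' C he hocc hs
  have he' : IsInvSeq (transFin r p p' S e) := L_isInv
  funext i
  apply Fin.ext
  show min (transf r p' p S (transFin r p p' S e) i.1) i.1 = (e i : ℕ)
  rw [min_eq_left (L_bound C' he' hocc' i.1)]
  by_cases hex : ∃ s, s ∈ S ∧ s ≤ i.1 ∧ i.1 < s + r
  · obtain ⟨s, hsS, hx1, hx2⟩ := hex
    rw [L_consistent C' hocc' hsS hx1 hx2,
      L_levels C C' he hocc hsS (C.hK _ (show i.1 - s < r by omega)),
      L_eval C (hocc s hsS) (show i.1 - s < r by omega),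
      show s + (i.1 - s) = i.1 by omega]
    unfold extSeq
    rw [dif_pos i.isLt]
  · rw [transf, dif_neg hex, L_ext C he hocc, transf, dif_neg hex]
    unfold extSeq
    rw [dif_pos i.isLt]

lemma count_superset (C : Ctx r p p' K) (C' : Ctx r p' p K) (S : Finset ℕ) :
    Nat.card {e : Fin n → Fin n // IsInvSeq e ∧ ∀ s ∈ S, OccPatAt r p e s}
      = Nat.card {e : Fin n → Fin n // IsInvSeq e ∧ ∀ s ∈ S, OccPatAt r p' e s} := by
  apply Nat.card_congr
  refine ⟨fun x => ⟨transFin r p p' S x.1, L_isInv, fun s hs => L_occ' C x.2.1 x.2.2 hs⟩,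
    fun y => ⟨transFin r p' p S y.1, L_isInv, fun s hs => L_occ' C' y.2.1 y.2.2 hs⟩, ?_, ?_⟩
  · rintro ⟨e, he, hocc⟩
    exact Subtype.ext (L_comp C C' he hocc)
  · rintro ⟨e, he, hocc⟩
    exact Subtype.ext (L_comp C' C he hocc)

end Lemmas

/-! ## Counting plumbing -/

lemma card_filter_natcard {α : Type} [Fintype α] (P : α → Prop) [DecidablePred P] :
    (Finset.univ.filter P).card = Nat.card {x // P x} := by
  rw [Nat.card_eq_fintype_card, Fintype.card_subtype]

lemma natcard_inter {n : ℕ} (Q : (Fin n → Fin n) → Prop) :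
    Nat.card {x : {e : Fin n → Fin n // IsInvSeq e} // Q x.1}
      = Nat.card {e : Fin n → Fin n // IsInvSeq e ∧ Q e} :=
  Nat.card_congr (Equiv.subtypeSubtypeEquivSubtypeInter _ _)

theorem stmt17 (r : ℕ) (p p' : ℕ → ℕ) (hp : IsPattern r p) (hp' : IsPattern r p')
    (hno : SelfNonOverlapping r p) (hno' : SelfNonOverlapping r p')
    (hint : Interchangeable r p p') :
    ∀ (n : ℕ) (T : Finset ℕ), (∀ i ∈ T, i < n) →
      Nat.card {e : Fin n → Fin n // IsInvSeq e ∧ ∀ i : ℕ, OccPatAt r p e i ↔ i ∈ T} =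
      Nat.card {e : Fin n → Fin n // IsInvSeq e ∧ ∀ i : ℕ, OccPatAt r p' e i ↔ i ∈ T} := by
  intro n T hT
  rcases Nat.eq_zero_or_pos r with hr0 | hr
  · subst hr0
    apply Nat.card_congr
    apply Equiv.subtypeEquivRight
    intro e
    have key : ∀ q : ℕ → ℕ, ∀ i, OccPatAt 0 q e i ↔ i + 0 ≤ n := by
      intro q i
      constructor
      · exact fun h => h.1
      · exact fun h => ⟨h, fun a ha => by omega⟩
    constructor <;> rintro ⟨h1, h2⟩ <;>
      exact ⟨h1, fun i => ((key _ i).trans ((key _ i).symm.trans (h2 i)))⟩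
  · set K := (Finset.range r).sup p with hKdef
    have hsup' : (Finset.range r).sup p' = K := hint.2.2.1.symm
    have hKp : ∀ a < r, p a ≤ K := fun a ha => Finset.le_sup (Finset.mem_range.2 ha)
    have hKp' : ∀ a < r, p' a ≤ K := fun a ha => by
      rw [← hsup']; exact Finset.le_sup (Finset.mem_range.2 ha)
    have C : Ctx r p p' K :=
      ⟨hr, hKp, hKp', fun m hm => pat_surj hp hr hm, hint.1, hint.2.1, hint.2.2.2.1, hno⟩
    have C' : Ctx r p' p K :=
      ⟨hr, hKp', hKp, fun m hm => pat_surj hp' hr (by rw [hsup']; exact hm),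
        hint.1.symm, hint.2.1.symm, hint.2.2.2.2, hno'⟩
    have e1 : ∀ (q : ℕ → ℕ) (e : Fin n → Fin n),
        (S : Finset ℕ) → ((S ⊆ (Finset.range n).filter fun i => OccPatAt r q e i) ↔
          (∀ s ∈ S, OccPatAt r q e s)) := by
      intro q e S
      constructor
      · intro h s hs
        exact (Finset.mem_filter.1 (h hs)).2
      · intro h i hi
        exact Finset.mem_filter.2
          ⟨Finset.mem_range.2 (by have := (h i hi).1; omega), h i hi⟩
    have e2 : ∀ (q : ℕ → ℕ) (e : Fin n → Fin n),
        (((Finset.range n).filter fun i => OccPatAt r q e i) = T) ↔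
          (∀ i : ℕ, OccPatAt r q e i ↔ i ∈ T) := by
      intro q e
      constructor
      · intro h i
        constructor
        · intro hocc
          have : i ∈ (Finset.range n).filter fun i => OccPatAt r q e i :=
            Finset.mem_filter.2 ⟨Finset.mem_range.2 (by have := hocc.1; omega), hocc⟩
          rwa [h] at this
        · intro hiT
          have : i ∈ (Finset.range n).filter fun i => OccPatAt r q e i := h ▸ hiT
          exact (Finset.mem_filter.1 this).2
      · intro h
        ext i
        rw [Finset.mem_filter, Finset.mem_range]
        constructor
        · rintro ⟨_, ho⟩; exact (h i).1 ho
        · intro hiT; exact ⟨hT i hiT, (h i).2 hiT⟩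
    have hmain := moebius
      (fun a : {e : Fin n → Fin n // IsInvSeq e} =>
        (Finset.range n).filter fun i => OccPatAt r p a.1 i)
      (fun a : {e : Fin n → Fin n // IsInvSeq e} =>
        (Finset.range n).filter fun i => OccPatAt r p' a.1 i)
      (Finset.range n) (fun a => Finset.filter_subset _ _) (fun a => Finset.filter_subset _ _)
      (fun S => by
        beta_reduce
        rw [card_filter_natcard, card_filter_natcard]
        calc Nat.card {x : {e : Fin n → Fin n // IsInvSeq e} //
                S ⊆ (Finset.range n).filter fun i => OccPatAt r p x.1 i}
            = Nat.card {e : Fin n → Fin n // IsInvSeq e ∧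
                S ⊆ (Finset.range n).filter fun i => OccPatAt r p e i} :=
              natcard_inter (fun e => S ⊆ (Finset.range n).filter fun i => OccPatAt r p e i)
          _ = Nat.card {e : Fin n → Fin n // IsInvSeq e ∧ ∀ s ∈ S, OccPatAt r p e s} :=
              Nat.card_congr (Equiv.subtypeEquivRight fun e =>
                and_congr_right fun _ => e1 p e S)
          _ = Nat.card {e : Fin n → Fin n // IsInvSeq e ∧ ∀ s ∈ S, OccPatAt r p' e s} :=
              count_superset C C' S
          _ = Nat.card {e : Fin n → Fin n // IsInvSeq e ∧
                S ⊆ (Finset.range n).filter fun i => OccPatAt r p' e i} :=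
              Nat.card_congr (Equiv.subtypeEquivRight fun e =>
                and_congr_right fun _ => (e1 p' e S).symm)
          _ = Nat.card {x : {e : Fin n → Fin n // IsInvSeq e} //
                S ⊆ (Finset.range n).filter fun i => OccPatAt r p' x.1 i} :=
              (natcard_inter (fun e =>
                S ⊆ (Finset.range n).filter fun i => OccPatAt r p' e i)).symm)
      T
    beta_reduce at hmain
    rw [card_filter_natcard, card_filter_natcard] at hmain
    calc Nat.card {e : Fin n → Fin n // IsInvSeq e ∧ ∀ i : ℕ, OccPatAt r p e i ↔ i ∈ T}
        = Nat.card {e : Fin n → Fin n // IsInvSeq e ∧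
            ((Finset.range n).filter fun i => OccPatAt r p e i) = T} :=
          Nat.card_congr (Equiv.subtypeEquivRight fun e =>
            and_congr_right fun _ => (e2 p e).symm)
      _ = Nat.card {x : {e : Fin n → Fin n // IsInvSeq e} //
            ((Finset.range n).filter fun i => OccPatAt r p x.1 i) = T} :=
          (natcard_inter (fun e =>
            ((Finset.range n).filter fun i => OccPatAt r p e i) = T)).symm
      _ = Nat.card {x : {e : Fin n → Fin n // IsInvSeq e} //
            ((Finset.range n).filter fun i => OccPatAt r p' x.1 i) = T} := hmain
      _ = Nat.card {e : Fin n → Fin n // IsInvSeq e ∧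
            ((Finset.range n).filter fun i => OccPatAt r p' e i) = T} :=
          natcard_inter (fun e => ((Finset.range n).filter fun i => OccPatAt r p' e i) = T)
      _ = Nat.card {e : Fin n → Fin n // IsInvSeq e ∧ ∀ i : ℕ, OccPatAt r p' e i ↔ i ∈ T} :=
          Nat.card_congr (Equiv.subtypeEquivRight fun e =>
            and_congr_right fun _ => e2 p' e)
end

section
/- Let p, p' be consecutive patterns of the same length with p_1 = p'_1, p_r = p'_r, and the same maximum entry. Then p is changeable for p' (i.e., p'_i ≤ max({p_j : 1 ≤ j ≤ i} ∪ {p_j - j + i : i < j ≤ r}) for all i) if and only if for every inversion sequence e and every occurrence of p in e, replacing that occurrence by the corresponding order-isomorphic occurrence of p' (using the same set of values via the order-preserving bijection) again yields an inversion sequence. -/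
/-- The window `e_i … e_{i+r-1}` (0-indexed, within a sequence of length `n`) is an
occurrence of the pattern `p` of length `r`. -/
def OccAt (r : ℕ) (p : ℕ → ℕ) (e : ℕ → ℕ) (n i : ℕ) : Prop :=
  i + r ≤ n ∧ ∀ a < r, ∀ b < r, (e (i + a) ≤ e (i + b) ↔ p a ≤ p b)

/-- `e'` is obtained from `e` by changing the occurrence of `p` at position `i` into an
occurrence of `p'`: it agrees with `e` off the window, and on the window the entry
`e'_{i+a}` is `f(p'_a)` where `f` is the order-preserving bijection with `e_{i+b} = f(p_b)`;
this is captured by the cross comparisons. -/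
def IsChange (r : ℕ) (p p' : ℕ → ℕ) (e e' : ℕ → ℕ) (n i : ℕ) : Prop :=
  (∀ j < n, (j < i ∨ i + r ≤ j) → e' j = e j) ∧
  (∀ a < r, ∀ b < r,
      (e' (i + a) ≤ e (i + b) ↔ p' a ≤ p b) ∧ (e (i + b) ≤ e' (i + a) ↔ p b ≤ p' a))

/-- auxiliary: a step function used in the counterexample construction -/
def gfun (q D v : ℕ) : ℕ := if v < q then v else v + D

lemma gfun_mono (q D x y : ℕ) : gfun q D x ≤ gfun q D y ↔ x ≤ y := by
  unfold gfun
  split <;> split <;> omega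

theorem stmt18 (r : ℕ) (hr : 1 ≤ r) (p p' : ℕ → ℕ)
    (hp : IsPattern r p) (hp' : IsPattern r p')
    (hfirst : p 0 = p' 0) (hlast : p (r - 1) = p' (r - 1))
    (hsup : (Finset.range r).sup p = (Finset.range r).sup p') :
    ChangeableFor r p p' ↔
      ∀ (n i : ℕ) (e e' : ℕ → ℕ),
        (∀ j < n, e j ≤ j) →
        OccAt r p e n i →
        IsChange r p p' e e' n i →
        ∀ j < n, e' j ≤ j := by
  constructor
  · intro hch n i e e' he hocc hchg j hj
    obtain ⟨hin, hiso⟩ := hocc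
    obtain ⟨hoff, hcr⟩ := hchg
    by_cases hw : i ≤ j ∧ j < i + r
    · obtain ⟨h1, h2⟩ := hw
      have har : j - i < r := by omega
      set a := j - i with ha
      have hja : j = i + a := by omega
      obtain ⟨j0, hj0r, hcase⟩ := hch a har
      have key : ∀ d : ℕ, ∀ b, b < r → p' a + d ≤ p b → e' (i + a) + d ≤ e (i + b) := by
        intro d
        induction d with
        | zero =>
          intro b hb hpb
          have := ((hcr a har b hb).1).mpr (by omega)
          omega
        | succ d ih =>
          intro b hb hpb
          obtain ⟨k, hk, hpk⟩ := hp b hb (p' a + d) (by omega)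
          have h1 := ih k hk (by omega)
          have h2 : ¬ (e (i + b) ≤ e (i + k)) := by
            rw [hiso b hb k hk]; omega
          omega
      rw [hja]
      rcases hcase with ⟨hle, hpp⟩ | ⟨hlt, hpp⟩
      · have h3 := ((hcr a har j0 hj0r).1).mpr hpp
        have h4 := he (i + j0) (by omega)
        omega
      · have h3 := key (j0 - a) j0 hj0r (by omega)
        have h4 := he (i + j0) (by omega)
        omega
    · have h1 := hoff j hj (by omega)
      have h2 := he j hj
      omega
  · intro H
    by_contra hch
    unfold ChangeableFor at hch
    push_neg at hch
    obtain ⟨i0, hi0, hfail⟩ := hch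
    set m := (Finset.range r).sup p with hm
    set q := p' i0 with hq
    have hqm : q ≤ m := by
      rw [hsup]
      exact Finset.le_sup (Finset.mem_range.mpr hi0)
    have hpm : ∀ a, a < r → p a ≤ m :=
      fun a ha => Finset.le_sup (Finset.mem_range.mpr ha)
    set D := m + i0 + 1 - q with hD
    set E : ℕ → ℕ := fun j => if m ≤ j ∧ j < m + r then gfun q D (p (j - m)) else 0 with hE
    set E' : ℕ → ℕ := fun j => if m ≤ j ∧ j < m + r then gfun q D (p' (j - m)) else 0 with hE'
    have hEval : ∀ a, a < r → E (m + a) = gfun q D (p a) := by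
      intro a ha
      simp only [hE]
      rw [if_pos ⟨by omega, by omega⟩, Nat.add_sub_cancel_left]
    have hEval' : ∀ a, a < r → E' (m + a) = gfun q D (p' a) := by
      intro a ha
      simp only [hE']
      rw [if_pos ⟨by omega, by omega⟩, Nat.add_sub_cancel_left]
    -- facts from the failure of changeability
    have hfail1 : ∀ j, j < r → j ≤ i0 → p j < q := by
      intro j hj hji
      have := hfail j hj
      omega
    have hfail2 : ∀ j, j < r → i0 < j → p j + i0 < q + j := by
      intro j hj hji
      have := hfail j hj
      omega
    have he : ∀ j, j < m + r → E j ≤ j := by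
      intro j hj
      by_cases hw : m ≤ j ∧ j < m + r
      · have har : j - m < r := by omega
        have : E j = gfun q D (p (j - m)) := by
          simp only [hE]; rw [if_pos hw]
        rw [this]
        unfold gfun
        split
        · have := hpm (j - m) har; omega
        · -- p (j-m) ≥ q, hence j - m > i0 and p(j-m) + i0 < q + (j-m)
          have h1 : i0 < j - m := by
            by_contra hcon
            exact absurd (hfail1 (j - m) har (by omega)) (by omega)
          have h2 := hfail2 (j - m) har h1
          omega
      · simp only [hE]; rw [if_neg hw]; omega
    have hocc : OccAt r p E (m + r) m := by
      refine ⟨le_refl _, fun a ha b hb => ?_⟩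
      rw [hEval a ha, hEval b hb, gfun_mono]
    have hchg : IsChange r p p' E E' (m + r) m := by
      constructor
      · intro j hj hjw
        simp only [hE, hE']
        rw [if_neg (by omega), if_neg (by omega)]
      · intro a ha b hb
        rw [hEval' a ha, hEval b hb, gfun_mono, gfun_mono]
        exact ⟨Iff.rfl, Iff.rfl⟩
    have hcon := H (m + r) m E E' he hocc hchg (m + i0) (by omega)
    have : E' (m + i0) = q + D := by
      rw [hEval' i0 hi0, ← hq]
      unfold gfun
      rw [if_neg (by omega)]
    omega
end

section
/- The consecutive patterns 0102 and 0112 in inversion sequences are super-strongly Wilf equivalent: for all n and all T ⊆ {1,...,n}, the number of inversion sequences of length n whose set of positions of occurrences of 0102 equals T is the same as the corresponding number for 0112. -/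
/-- Occurrence of 0102 in (0-indexed) position `i`: `e_i = e_{i+2} < e_{i+1} < e_{i+3}`. -/
def Occ0102At (n : ℕ) (f : ℕ → ℕ) (i : ℕ) : Prop :=
  i + 3 < n ∧ f i = f (i + 2) ∧ f i < f (i + 1) ∧ f (i + 1) < f (i + 3)

/-- Occurrence of 0112 in (0-indexed) position `i`: `e_i < e_{i+1} = e_{i+2} < e_{i+3}`. -/
def Occ0112At (n : ℕ) (f : ℕ → ℕ) (i : ℕ) : Prop :=
  i + 3 < n ∧ f i < f (i + 1) ∧ f (i + 1) = f (i + 2) ∧ f (i + 2) < f (i + 3)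

/-!
Fix `T`. Occurrences of either pattern at all positions of `T` force `T` to have no two
consecutive elements, and then an occurrence at `i` pins down `e_{i+2}`: it equals `e_i` for
`0102` and `e_{i+1}` for `0112`. Reading `e_{i+2}` from position `i + 1` instead of `i` turns
the first kind of sequence into the second; the inverse reads it from the last term `j` of the
chain `i, i - 2, i - 4, …` (the first one with `j - 2 ∉ T`). Both maps only move indices to the
left, so they preserve inversion sequences. Hence the numbers of sequences whose occurrence set
contains `T` agree for the two patterns, and Möbius inversion over supersets gives the numbers
with occurrence set exactly `T`.
-/

open Finset

section SupersetCounts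

variable {ι α β : Type*} [DecidableEq ι]

lemma card_filter_subset_eq_add_sum {s : Finset α} {f : α → Finset ι} {F : Finset (Finset ι)}
    (hF : ∀ a ∈ s, f a ∈ F) (T : Finset ι) :
    #{a ∈ s | T ⊆ f a} = #{a ∈ s | f a = T} + ∑ R ∈ F with T ⊂ R, #{a ∈ s | f a = R} := by
  rw [← card_filter_add_card_filter_not (fun a => f a = T), filter_filter, filter_filter]
  congr 1
  · exact congrArg card (filter_congr fun a _ => and_iff_right_of_imp fun h => h ▸ subset_rfl)
  · rw [card_eq_sum_card_fiberwise (t := {R ∈ F | T ⊂ R}) fun a ha => ?_]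
    · refine sum_congr rfl fun R hR => congrArg card ?_
      rw [filter_filter]
      have hTR := (mem_filter.1 hR).2
      exact filter_congr fun a _ => ⟨fun h => h.2, fun h => ⟨h ▸ ⟨hTR.subset, hTR.ne'⟩, h⟩⟩
    · obtain ⟨ha, hT, hne⟩ := mem_filter.1 ha
      exact mem_filter.2 ⟨hF a ha, Finset.ssubset_iff_subset_ne.2 ⟨hT, Ne.symm hne⟩⟩

theorem card_filter_eq_eq_of_card_filter_subset_eq {s : Finset α} {t : Finset β}
    {f : α → Finset ι} {g : β → Finset ι}
    (h : ∀ T, #{a ∈ s | T ⊆ f a} = #{b ∈ t | T ⊆ g b}) (T : Finset ι) :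
    #{a ∈ s | f a = T} = #{b ∈ t | g b = T} := by
  set F := s.image f ∪ t.image g
  have hf : ∀ a ∈ s, f a ∈ F := fun a ha => mem_union_left _ (mem_image_of_mem f ha)
  have hg : ∀ b ∈ t, g b ∈ F := fun b hb => mem_union_right _ (mem_image_of_mem g hb)
  -- Sets larger than every value of `f` and `g` have empty fibres; below, induct downward.
  rcases le_or_gt #T (F.sup card) with hT | hT
  swap
  · have hbig : ∀ R ∈ F, R ≠ T := fun R hR hRT => hT.not_ge (hRT ▸ le_sup hR)
    rw [filter_false_of_mem fun a ha => hbig _ (hf a ha),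
      filter_false_of_mem fun b hb => hbig _ (hg b hb)]
    rfl
  refine strongDownwardInduction (p := fun T => #{a ∈ s | f a = T} = #{b ∈ t | g b = T})
    (fun T ih _ => ?_) T hT
  have hsum : ∑ R ∈ F with T ⊂ R, #{a ∈ s | f a = R} = ∑ R ∈ F with T ⊂ R, #{b ∈ t | g b = R} :=
    sum_congr rfl fun R hR => ih (le_sup (mem_filter.1 hR).1) (mem_filter.1 hR).2
  have := h T
  rw [card_filter_subset_eq_add_sum hf, card_filter_subset_eq_add_sum hg, hsum] at this
  omega

end SupersetCounts

section InversionSequences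

variable {n : ℕ}

def reindex (σ : ℕ → ℕ) (hσ : ∀ j, σ j ≤ j) (e : Fin n → Fin n) : Fin n → Fin n :=
  fun j => e ⟨σ j, (hσ j).trans_lt j.isLt⟩

section Reindex

variable {σ : ℕ → ℕ} {hσ : ∀ j, σ j ≤ j} {e : Fin n → Fin n}

lemma extSeq_reindex {j : ℕ} (hj : j < n) : extSeq (reindex σ hσ e) j = extSeq e (σ j) := by
  simp [extSeq, hj, (hσ j).trans_lt hj, reindex]

lemma IsInvSeq.reindex (he : IsInvSeq e) : IsInvSeq (reindex σ hσ e) :=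
  fun j => (he _).trans (hσ j)

lemma reindex_eq_self (h : ∀ j < n, extSeq e (σ j) = extSeq e j) : reindex σ hσ e = e := by
  funext j
  have := h j j.isLt
  simp only [extSeq, j.isLt, (hσ j).trans_lt j.isLt, dite_true] at this
  exact Fin.ext this

lemma reindex_reindex {τ : ℕ → ℕ} {hτ : ∀ j, τ j ≤ j} :
    reindex σ hσ (reindex τ hτ e) = reindex (τ ∘ σ) (fun j => (hτ _).trans (hσ j)) e :=
  rfl

end Reindex

def shiftBack (T : Finset ℕ) : ℕ → ℕ
  | j + 2 => if j ∈ T then j + 1 else j + 2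
  | j => j

def chainRoot (T : Finset ℕ) : ℕ → ℕ
  | j + 2 => if j ∈ T then chainRoot T j else j + 2
  | j => j

section IndexMaps

variable {T : Finset ℕ}

lemma shiftBack_add_two {j : ℕ} (h : j ∈ T) : shiftBack T (j + 2) = j + 1 := by
  simp [shiftBack, h]

lemma shiftBack_of_forall_ne {j : ℕ} (h : ∀ k ∈ T, k + 2 ≠ j) : shiftBack T j = j := by
  match j with
  | 0 | 1 => rfl
  | j + 2 =>
    have hj : j ∉ T := fun hj => h j hj rfl
    simp [shiftBack, hj]

lemma shiftBack_le (j : ℕ) : shiftBack T j ≤ j := by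
  match j with
  | 0 | 1 => exact le_rfl
  | j + 2 => by_cases h : j ∈ T <;> simp [shiftBack, h]

lemma chainRoot_add_two {j : ℕ} (h : j ∈ T) : chainRoot T (j + 2) = chainRoot T j := by
  simp [chainRoot, h]

lemma chainRoot_of_forall_ne {j : ℕ} (h : ∀ k ∈ T, k + 2 ≠ j) : chainRoot T j = j := by
  match j with
  | 0 | 1 => rfl
  | j + 2 =>
    have hj : j ∉ T := fun hj => h j hj rfl
    simp [chainRoot, hj]

lemma chainRoot_le (j : ℕ) : chainRoot T j ≤ j := by
  match j with
  | 0 | 1 => exact le_rfl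
  | j + 2 =>
    unfold chainRoot
    split_ifs
    · exact (chainRoot_le j).trans (by omega)
    · exact le_rfl

lemma shiftBack_chainRoot (j : ℕ) : shiftBack T (chainRoot T j) = chainRoot T j := by
  match j with
  | 0 | 1 => rfl
  | j + 2 =>
    unfold chainRoot
    split_ifs with h
    · exact shiftBack_chainRoot j
    · simp [shiftBack, h]

lemma chainRoot_shiftBack (hT : ∀ i ∈ T, i + 1 ∉ T) (j : ℕ) :
    chainRoot T (shiftBack T j) = shiftBack T j := by
  match j with
  | 0 | 1 => rfl
  | j + 2 =>
    by_cases h : j ∈ T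
    · rw [shiftBack_add_two h]
      exact chainRoot_of_forall_ne fun k hk hkj => hT k hk (by rwa [show k + 1 = j by omega])
    · simp [shiftBack, chainRoot, h]

end IndexMaps

section Patterns

variable {f g : ℕ → ℕ} {T : Finset ℕ} {i : ℕ}

lemma Occ0102At.lt (h : Occ0102At n f i) : i < n := by
  have := h.1; omega

lemma Occ0112At.lt (h : Occ0112At n f i) : i < n := by
  have := h.1; omega

lemma Occ0102At.not_add_one (h : Occ0102At n f i) : ¬Occ0102At n f (i + 1) := by
  rintro ⟨-, h', -, -⟩
  exact h.2.2.2.ne h'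

lemma Occ0112At.not_add_one (h : Occ0112At n f i) : ¬Occ0112At n f (i + 1) := by
  rintro ⟨-, h', -, -⟩
  exact h'.ne h.2.2.1

lemma add_one_notMem_of_forall_occ0102At (hT : ∀ i ∈ T, Occ0102At n f i) :
    ∀ i ∈ T, i + 1 ∉ T :=
  fun i hi hi' => (hT i hi).not_add_one (hT _ hi')

lemma add_one_notMem_of_forall_occ0112At (hT : ∀ i ∈ T, Occ0112At n f i) :
    ∀ i ∈ T, i + 1 ∉ T :=
  fun i hi hi' => (hT i hi).not_add_one (hT _ hi')

lemma add_two_ne_add_one (hT : ∀ i ∈ T, i + 1 ∉ T) (hi : i ∈ T) : ∀ k ∈ T, k + 2 ≠ i + 1 :=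
  fun k hk hki => hT k hk (by rwa [show k + 1 = i by omega])

lemma add_two_ne_add_three (hT : ∀ i ∈ T, i + 1 ∉ T) (hi : i ∈ T) : ∀ k ∈ T, k + 2 ≠ i + 3 :=
  fun k hk hki => hT i hi (by rwa [show i + 1 = k by omega])

lemma apply_chainRoot_eq (hT : ∀ i ∈ T, Occ0102At n f i) (j : ℕ) : f (chainRoot T j) = f j := by
  match j with
  | 0 | 1 => rfl
  | j + 2 =>
    by_cases hj : j ∈ T
    · rw [chainRoot_add_two hj, apply_chainRoot_eq hT j, (hT j hj).2.1]
    · simp [chainRoot, hj]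

lemma apply_chainRoot_le (hT : ∀ i ∈ T, Occ0112At n f i) (j : ℕ) : f (chainRoot T j) ≤ f j := by
  match j with
  | 0 | 1 => exact le_rfl
  | j + 2 =>
    by_cases hj : j ∈ T
    · obtain ⟨-, h01, h12, -⟩ := hT j hj
      rw [chainRoot_add_two hj, ← h12]
      exact (apply_chainRoot_le hT j).trans h01.le
    · simp [chainRoot, hj]

lemma apply_shiftBack_eq (hT : ∀ i ∈ T, Occ0112At n f i) (j : ℕ) : f (shiftBack T j) = f j := by
  match j with
  | 0 | 1 => rfl
  | j + 2 =>
    by_cases hj : j ∈ T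
    · rw [shiftBack_add_two hj, (hT j hj).2.2.1]
    · simp [shiftBack, hj]

lemma apply_shiftBack_lt (hT : ∀ i ∈ T, Occ0102At n f i) (hi : i ∈ T) :
    f (shiftBack T i) < f (i + 1) := by
  match i with
  | 0 | 1 => exact (hT _ hi).2.2.1
  | k + 2 =>
    by_cases hk : k ∈ T
    · rw [shiftBack_add_two hk]
      exact (hT k hk).2.2.2
    · simpa [shiftBack, hk] using (hT _ hi).2.2.1

lemma occ0112At_of_shiftBack (hT : ∀ i ∈ T, Occ0102At n f i)
    (hg : ∀ j < n, g j = f (shiftBack T j)) : ∀ i ∈ T, Occ0112At n g i := by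
  have hsep := add_one_notMem_of_forall_occ0102At hT
  intro i hi
  obtain ⟨hn, -, -, h13⟩ := hT i hi
  rw [Occ0112At, hg i (by omega), hg (i + 1) (by omega), hg (i + 2) (by omega),
    hg (i + 3) hn, shiftBack_of_forall_ne (add_two_ne_add_one hsep hi), shiftBack_add_two hi,
    shiftBack_of_forall_ne (add_two_ne_add_three hsep hi)]
  exact ⟨hn, apply_shiftBack_lt hT hi, rfl, h13⟩

lemma occ0102At_of_chainRoot (hT : ∀ i ∈ T, Occ0112At n f i)
    (hg : ∀ j < n, g j = f (chainRoot T j)) : ∀ i ∈ T, Occ0102At n g i := by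
  have hsep := add_one_notMem_of_forall_occ0112At hT
  intro i hi
  obtain ⟨hn, h01, h12, h23⟩ := hT i hi
  rw [Occ0102At, hg i (by omega), hg (i + 1) (by omega), hg (i + 2) (by omega),
    hg (i + 3) hn, chainRoot_of_forall_ne (add_two_ne_add_one hsep hi), chainRoot_add_two hi,
    chainRoot_of_forall_ne (add_two_ne_add_three hsep hi)]
  exact ⟨hn, rfl, (apply_chainRoot_le hT i).trans_lt h01, h12.trans_lt h23⟩

end Patterns

instance (n : ℕ) : DecidablePred (IsInvSeq (n := n)) :=
  fun _ => inferInstanceAs (Decidable (∀ _, _))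

instance (n : ℕ) (f : ℕ → ℕ) : DecidablePred (Occ0102At n f) :=
  fun _ => inferInstanceAs (Decidable (_ ∧ _))

instance (n : ℕ) (f : ℕ → ℕ) : DecidablePred (Occ0112At n f) :=
  fun _ => inferInstanceAs (Decidable (_ ∧ _))

def invSeqs (n : ℕ) : Finset (Fin n → Fin n) := {e | IsInvSeq e}

theorem card_forall_occ0102At_eq_card_forall_occ0112At (T : Finset ℕ) :
    #{e ∈ invSeqs n | ∀ i ∈ T, Occ0102At n (extSeq e) i} =
      #{e ∈ invSeqs n | ∀ i ∈ T, Occ0112At n (extSeq e) i} := by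
  refine card_bij' (fun e _ => reindex (shiftBack T) shiftBack_le e)
    (fun e _ => reindex (chainRoot T) chainRoot_le e) ?_ ?_ ?_ ?_ <;>
    simp only [invSeqs, mem_filter, mem_univ, true_and]
  · rintro e ⟨he, hT⟩
    exact ⟨he.reindex, occ0112At_of_shiftBack hT fun j hj => extSeq_reindex hj⟩
  · rintro e ⟨he, hT⟩
    exact ⟨he.reindex, occ0102At_of_chainRoot hT fun j hj => extSeq_reindex hj⟩
  · rintro e ⟨-, hT⟩
    refine reindex_reindex.trans (reindex_eq_self fun j _ => ?_)
    rw [Function.comp_apply, shiftBack_chainRoot, apply_chainRoot_eq hT]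
  · rintro e ⟨-, hT⟩
    refine reindex_reindex.trans (reindex_eq_self fun j _ => ?_)
    rw [Function.comp_apply, chainRoot_shiftBack (add_one_notMem_of_forall_occ0112At hT),
      apply_shiftBack_eq hT]

lemma subset_filter_range_iff {P : ℕ → Prop} [DecidablePred P] (hP : ∀ i, P i → i < n)
    (T : Finset ℕ) : T ⊆ {i ∈ range n | P i} ↔ ∀ i ∈ T, P i := by
  simp only [subset_iff, mem_filter, mem_range]
  exact forall₂_congr fun i _ => and_iff_right_of_imp (hP i)

lemma natCard_eq_card_filter_range_eq {P : (Fin n → Fin n) → ℕ → Prop}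
    [∀ e, DecidablePred (P e)] (hP : ∀ e i, P e i → i < n) (T : Finset ℕ) :
    Nat.card {e // IsInvSeq e ∧ ∀ i, P e i ↔ i ∈ T} =
      #{e ∈ invSeqs n | {i ∈ range n | P e i} = T} := by
  rw [← Nat.card_eq_finsetCard]
  refine Nat.card_congr (Equiv.subtypeEquivRight fun e => ?_)
  simp only [invSeqs, mem_filter, mem_univ, true_and, Finset.ext_iff, mem_range]
  exact and_congr_right' <|
    forall_congr' fun i => iff_congr (and_iff_right_of_imp (hP e i)).symm Iff.rfl

end InversionSequences

theorem stmt19_general (n : ℕ) (T : Finset ℕ) :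
    Nat.card {e : Fin n → Fin n // IsInvSeq e ∧ ∀ i : ℕ, Occ0102At n (extSeq e) i ↔ i ∈ T} =
    Nat.card {e : Fin n → Fin n // IsInvSeq e ∧ ∀ i : ℕ, Occ0112At n (extSeq e) i ↔ i ∈ T} := by
  rw [natCard_eq_card_filter_range_eq (fun _ _ => Occ0102At.lt),
    natCard_eq_card_filter_range_eq (fun _ _ => Occ0112At.lt)]
  refine card_filter_eq_eq_of_card_filter_subset_eq (fun R => ?_) T
  simp only [subset_filter_range_iff (fun _ => Occ0102At.lt),
    subset_filter_range_iff (fun _ => Occ0112At.lt)]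
  exact card_forall_occ0102At_eq_card_forall_occ0112At R

theorem stmt19 (n : ℕ) (T : Finset ℕ) (hT : ∀ i ∈ T, i < n) :
    Nat.card {e : Fin n → Fin n // IsInvSeq e ∧ ∀ i : ℕ, Occ0102At n (extSeq e) i ↔ i ∈ T} =
    Nat.card {e : Fin n → Fin n // IsInvSeq e ∧ ∀ i : ℕ, Occ0112At n (extSeq e) i ↔ i ∈ T} :=
  stmt19_general n T
end
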